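/- Let (C*, d) be an acyclic cochain complex of finite-dimensional real inner product spaces (nonzero in finitely many degrees). Then (1/2) Σ_q (−1)^{q+1} q log det Δ^q = Σ_q (−1)^q log Vol(d̄^q), where Δ^q = d^♯ d + d d^♯ acting on C^q and d̄^q: (ker d^q)^⊥ → im d^q is the induced isomorphism. -/

import Mathlib

/-!
With `L q = log det'(d^♯ d on C^q) = 2 log Vol(d̄^q)`, acyclicity splits
`C^{q+1} = ker d^{q+1} ⊕ (ker d^{q+1})^⊥` into `Δ^{q+1}`-invariant pieces on which `Δ^{q+1}` acts as
`d d^♯` (on `ker d^{q+1} = im d^q`) and as `d^♯ d`. Since `d^q` restricts to an isomorphism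
`(ker d^q)^⊥ ≃ im d^q` conjugating `d^♯ d` to `d d^♯`, this gives
`log det Δ^{q+1} = L q + L (q+1)`. The weighted alternating sum then telescopes to
`Σ (-1)^q L q`, the boundary term vanishing because `d^N = 0`.
-/

open Module
open scoped Classical

variable {V : Type*} [NormedAddCommGroup V] [InnerProductSpace ℝ V] [FiniteDimensional ℝ V]
variable {W : Type*} [NormedAddCommGroup W] [InnerProductSpace ℝ W] [FiniteDimensional ℝ W]

/-- `det'`: the determinant of the restriction of `T` to the orthogonal complement of its
kernel, i.e. the product of the nonzero eigenvalues (for the self-adjoint operators to which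
it is applied). -/
noncomputable def detPrime (T : V →ₗ[ℝ] V) : ℝ :=
  if h : ∀ x ∈ (LinearMap.ker T)ᗮ, T x ∈ (LinearMap.ker T)ᗮ
  then LinearMap.det (T.restrict h) else 1

/-- `Vol(ᾱ) = √(det'(α^♯ α))`, the volume of the isomorphism
`ᾱ : (ker α)^⊥ → im α` induced by `α`. -/
noncomputable def volBar (α : V →ₗ[ℝ] W) : ℝ :=
  Real.sqrt (detPrime ((LinearMap.adjoint α).comp α))

open LinearMap Submodule

section DetRestrict

variable {K M : Type*} [Field K] [AddCommGroup M] [Module K M] [FiniteDimensional K M]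

theorem LinearMap.det_eq_det_restrict_mul_det_restrict {f : M →ₗ[K] M} {p q : Submodule K M}
    (hpq : IsCompl p q) (hp : ∀ x ∈ p, f x ∈ p) (hq : ∀ x ∈ q, f x ∈ q) :
    LinearMap.det f = LinearMap.det (f.restrict hp) * LinearMap.det (f.restrict hq) := by
  let e := p.prodEquivOfIsCompl q hpq
  have hconj : f = (e : p × q →ₗ[K] M) ∘ₗ (f.restrict hp).prodMap (f.restrict hq) ∘ₗ
      (e.symm : M →ₗ[K] p × q) := by
    ext x
    obtain ⟨⟨y, z⟩, rfl⟩ := e.surjective x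
    simp [e]
  conv_lhs => rw [hconj]
  rw [det_conj, det_prodMap]

end DetRestrict

theorem LinearMap.restrict_eq_restrict_of_eqOn {R M : Type*} [Semiring R] [AddCommMonoid M]
    [Module R M] {f g : M →ₗ[R] M} {p : Submodule R M} (hfg : ∀ x ∈ p, f x = g x)
    (hf : ∀ x ∈ p, f x ∈ p) (hg : ∀ x ∈ p, g x ∈ p) : f.restrict hf = g.restrict hg :=
  LinearMap.ext fun x => Subtype.ext (hfg x x.2)

section

variable {E : Type*} [NormedAddCommGroup E] [InnerProductSpace ℝ E]

theorem detPrime_eq_det_restrict {T : E →ₗ[ℝ] E} {K : Submodule ℝ E} (hK : (ker T)ᗮ = K)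
    (hT : ∀ x ∈ K, T x ∈ K) : detPrime T = LinearMap.det (T.restrict hT) := by
  subst hK
  exact dif_pos hT

theorem detPrime_zero : detPrime (0 : E →ₗ[ℝ] E) = 1 := by
  rw [detPrime_eq_det_restrict (K := ⊥) (by simp) fun _ _ => zero_mem _]
  exact LinearMap.det_eq_one_of_subsingleton _

theorem injective_domRestrict_orthogonal_ker {F : Type*} [AddCommGroup F] [Module ℝ F]
    (α : E →ₗ[ℝ] F) : Function.Injective (α.domRestrict (ker α)ᗮ) := by
  rw [← ker_eq_bot, ker_domRestrict, ← disjoint_iff_comap_eq_bot]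
  exact (orthogonal_disjoint _).symm

end

theorem adjoint_comp_self_mem_orthogonal_ker (α : V →ₗ[ℝ] W) (x : V) :
    (adjoint α ∘ₗ α) x ∈ (ker α)ᗮ := by
  rw [orthogonal_ker]
  exact mem_range_self _ _

theorem detPrime_adjoint_comp_self (α : V →ₗ[ℝ] W) :
    detPrime (adjoint α ∘ₗ α) =
      LinearMap.det
        ((adjoint α ∘ₗ α).restrict fun x _ => adjoint_comp_self_mem_orthogonal_ker α x) :=
  detPrime_eq_det_restrict (by rw [ker_adjoint_comp_self]) _

theorem restrict_adjoint_comp_self (α : V →ₗ[ℝ] W) :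
    (adjoint α ∘ₗ α).restrict (fun x _ => adjoint_comp_self_mem_orthogonal_ker α x) =
      adjoint (α.domRestrict (ker α)ᗮ) ∘ₗ α.domRestrict (ker α)ᗮ := by
  refine LinearMap.ext fun x => ext_inner_left ℝ fun v => ?_
  rw [comp_apply, adjoint_inner_right]
  exact adjoint_inner_right α (v : V) (α x)

theorem detPrime_adjoint_comp_self_eq_normDet_sq (α : V →ₗ[ℝ] W) :
    detPrime (adjoint α ∘ₗ α) = (α.domRestrict (ker α)ᗮ).normDet ^ 2 := by
  rw [detPrime_adjoint_comp_self, restrict_adjoint_comp_self, ← normDet_sq]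
  rfl

theorem detPrime_adjoint_comp_self_pos (α : V →ₗ[ℝ] W) : 0 < detPrime (adjoint α ∘ₗ α) := by
  have hne : (α.domRestrict (ker α)ᗮ).normDet ≠ 0 :=
    normDet_eq_zero_iff_ker_ne_bot.not_left.mpr
      (ker_eq_bot.mpr (injective_domRestrict_orthogonal_ker α))
  rw [detPrime_adjoint_comp_self_eq_normDet_sq]
  positivity

theorem detPrime_self_comp_adjoint (α : V →ₗ[ℝ] W) :
    detPrime (α ∘ₗ adjoint α) = detPrime (adjoint α ∘ₗ α) := by
  have hα : ∀ x ∈ (ker α)ᗮ, α x ∈ range α := fun x _ => mem_range_self α x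
  have hinj : Function.Injective (α.restrict hα) := fun x y hxy =>
    injective_domRestrict_orthogonal_ker α (congrArg Subtype.val hxy)
  have hsurj : Function.Surjective (α.restrict hα) := by
    rintro ⟨y, hy⟩
    rw [← range_self_comp_adjoint] at hy
    obtain ⟨z, rfl⟩ := hy
    have hz : adjoint α z ∈ (ker α)ᗮ := by rw [orthogonal_ker]; exact mem_range_self _ z
    exact ⟨⟨adjoint α z, hz⟩, rfl⟩
  let e := LinearEquiv.ofBijective _ ⟨hinj, hsurj⟩
  have hS : ∀ y ∈ range α, (α ∘ₗ adjoint α) y ∈ range α := fun y _ => mem_range_self α _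
  have hconj : (α ∘ₗ adjoint α).restrict hS = (e : (ker α)ᗮ →ₗ[ℝ] range α) ∘ₗ
      (adjoint α ∘ₗ α).restrict (fun x _ => adjoint_comp_self_mem_orthogonal_ker α x) ∘ₗ
      (e.symm : range α →ₗ[ℝ] (ker α)ᗮ) := by
    ext y
    obtain ⟨x, rfl⟩ := e.surjective y
    simp only [comp_apply, LinearEquiv.coe_coe, LinearEquiv.symm_apply_apply]
    rfl
  have hK : (ker (α ∘ₗ adjoint α))ᗮ = range α := by
    rw [ker_self_comp_adjoint, orthogonal_ker, adjoint_adjoint]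
  rw [detPrime_adjoint_comp_self, detPrime_eq_det_restrict hK hS, hconj, det_conj]

section Laplacian

variable {U : Type*} [NormedAddCommGroup U] [InnerProductSpace ℝ U] [FiniteDimensional ℝ U]

theorem det_laplacian_of_ker_eq_range (α : U →ₗ[ℝ] V) (β : V →ₗ[ℝ] W)
    (hexact : ker β = range α) :
    LinearMap.det (adjoint β ∘ₗ β + α ∘ₗ adjoint α) =
      detPrime (adjoint α ∘ₗ α) * detPrime (adjoint β ∘ₗ β) := by
  have hΔ_ker : ∀ x ∈ ker β, (adjoint β ∘ₗ β + α ∘ₗ adjoint α) x = (α ∘ₗ adjoint α) x := by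
    intro x hx
    simp [mem_ker.mp hx]
  have hΔ_perp : ∀ x ∈ (ker β)ᗮ,
      (adjoint β ∘ₗ β + α ∘ₗ adjoint α) x = (adjoint β ∘ₗ β) x := by
    intro x hx
    rw [hexact, orthogonal_range] at hx
    simp [mem_ker.mp hx]
  have hS : ∀ x ∈ ker β, (α ∘ₗ adjoint α) x ∈ ker β := fun x _ => hexact ▸ mem_range_self α _
  have hT : ∀ x ∈ (ker β)ᗮ, (adjoint β ∘ₗ β) x ∈ (ker β)ᗮ :=
    fun x _ => adjoint_comp_self_mem_orthogonal_ker β x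
  have hK : (ker (α ∘ₗ adjoint α))ᗮ = ker β := by
    rw [ker_self_comp_adjoint, orthogonal_ker, adjoint_adjoint, hexact]
  rw [det_eq_det_restrict_mul_det_restrict (ker β).isCompl_orthogonal
      (fun x hx => hΔ_ker x hx ▸ hS x hx) (fun x hx => hΔ_perp x hx ▸ hT x hx),
    restrict_eq_restrict_of_eqOn hΔ_ker _ hS, restrict_eq_restrict_of_eqOn hΔ_perp _ hT,
    ← detPrime_self_comp_adjoint, detPrime_eq_det_restrict hK hS,
    detPrime_eq_det_restrict (by rw [ker_adjoint_comp_self]) hT]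

end Laplacian

-- `D 0` carries the weight `0`, so it is left unconstrained.
theorem sum_range_neg_one_pow_succ_mul_mul_eq (L D : ℕ → ℝ)
    (hD : ∀ q, D (q + 1) = L (q + 1) + L q) (N : ℕ) :
    ∑ q ∈ Finset.range (N + 1), (-1 : ℝ) ^ (q + 1) * q * D q =
      ∑ q ∈ Finset.range (N + 1), (-1 : ℝ) ^ q * L q + (-1) ^ (N + 1) * (N + 1) * L N := by
  induction N with
  | zero => simp
  | succ n ih =>
    rw [Finset.sum_range_succ _ (n + 1), ih,
      Finset.sum_range_succ (fun q => (-1 : ℝ) ^ q * L q) (n + 1), hD]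
    push_cast
    ring

theorem log_torsion_eq_sum_log_vol_of_acyclic_general
    (C : ℕ → Type*) [∀ q, NormedAddCommGroup (C q)] [∀ q, InnerProductSpace ℝ (C q)]
    [∀ q, FiniteDimensional ℝ (C q)]
    (d : ∀ q : ℕ, C q →ₗ[ℝ] C (q + 1))
    (N : ℕ) (hsupp : ∀ q > N, Subsingleton (C q))
    -- acyclicity
    (hacyclic : ∀ q : ℕ, LinearMap.ker (d (q + 1)) = LinearMap.range (d q))
    -- the Laplacians Δ^q = d^♯ d + d d^♯
    (Δ : ∀ q : ℕ, C q →ₗ[ℝ] C q)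
    (hΔ : ∀ q : ℕ, Δ (q + 1) =
      (LinearMap.adjoint (d (q + 1))).comp (d (q + 1)) +
      (d q).comp (LinearMap.adjoint (d q))) :
    (1 / 2 : ℝ) * ∑ q ∈ Finset.range (N + 1),
        (-1 : ℝ) ^ (q + 1) * (q : ℝ) * Real.log (LinearMap.det (Δ q)) =
      ∑ q ∈ Finset.range (N + 1), (-1 : ℝ) ^ q * Real.log (volBar (d q)) := by
  set L : ℕ → ℝ := fun q => Real.log (detPrime (adjoint (d q) ∘ₗ d q))
  have hvol (q : ℕ) : Real.log (volBar (d q)) = L q / 2 :=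
    Real.log_sqrt (detPrime_adjoint_comp_self_pos (d q)).le
  have hΔL (q : ℕ) : Real.log (LinearMap.det (Δ (q + 1))) = L (q + 1) + L q := by
    rw [hΔ, det_laplacian_of_ker_eq_range _ _ (hacyclic q),
      Real.log_mul (detPrime_adjoint_comp_self_pos _).ne' (detPrime_adjoint_comp_self_pos _).ne',
      add_comm]
  have hLN : L N = 0 := by
    have := hsupp (N + 1) N.lt_succ_self
    have hdN : d N = 0 := Subsingleton.elim _ _
    simp [L, hdN, detPrime_zero]
  have htelescope :=
    sum_range_neg_one_pow_succ_mul_mul_eq L (fun q => Real.log (LinearMap.det (Δ q))) hΔL N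
  rw [htelescope, hLN, mul_zero, add_zero, Finset.mul_sum]
  exact Finset.sum_congr rfl fun q _ => by rw [hvol]; ring

theorem log_torsion_eq_sum_log_vol_of_acyclic
    (C : ℕ → Type*) [∀ q, NormedAddCommGroup (C q)] [∀ q, InnerProductSpace ℝ (C q)]
    [∀ q, FiniteDimensional ℝ (C q)]
    (d : ∀ q : ℕ, C q →ₗ[ℝ] C (q + 1))
    (hdd : ∀ q : ℕ, (d (q + 1)).comp (d q) = 0)
    (N : ℕ) (hsupp : ∀ q > N, Subsingleton (C q))
    -- acyclicity
    (h0 : LinearMap.ker (d 0) = ⊥)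
    (hacyclic : ∀ q : ℕ, LinearMap.ker (d (q + 1)) = LinearMap.range (d q))
    -- the Laplacians Δ^q = d^♯ d + d d^♯
    (Δ : ∀ q : ℕ, C q →ₗ[ℝ] C q)
    (hΔ0 : Δ 0 = (LinearMap.adjoint (d 0)).comp (d 0))
    (hΔ : ∀ q : ℕ, Δ (q + 1) =
      (LinearMap.adjoint (d (q + 1))).comp (d (q + 1)) +
      (d q).comp (LinearMap.adjoint (d q))) :
    (1 / 2 : ℝ) * ∑ q ∈ Finset.range (N + 1),
        (-1 : ℝ) ^ (q + 1) * (q : ℝ) * Real.log (LinearMap.det (Δ q)) =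
      ∑ q ∈ Finset.range (N + 1), (-1 : ℝ) ^ q * Real.log (volBar (d q)) :=
  log_torsion_eq_sum_log_vol_of_acyclic_general C d N hsupp hacyclic Δ hΔ
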